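/- arXiv:1012.5835 — 5 statements merged into one kernel-verified Lean document; each statement's English description precedes it below -/
import Mathlib

section
/- For every rational number k with k ∉ {0, 2, −2}, the quantities a(k), b(k), c(k) are all nonzero, and the three products a(k)b(k), b(k)c(k), a(k)c(k) are pairwise distinct. -/
/-!
Since `a(k) > 0`, `b(k) = k((k - 2)² + 16)/2` and `c(k) = (k + 2)²(k - 2)/2`, the sides are nonzero,
and the products are pairwise distinct as soon as the sides are. Up to constants, `a - c` is the cubic
`k³ - 8k² + 4k - 16`, which has no nontrivial projective zero mod 3 and hence no rational zero;
`b - a = (k - 2)(k² - 12k + 4)/2` and `b - c = -(3k² - 12k - 4)`, whose quadratic factors have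
discriminants 128 and 192, not rational squares.
-/

/-- The side `a(k) = 5k² − 4k + 4` of the Heron triangle family. -/
def sideA (k : ℚ) : ℚ := 5 * k ^ 2 - 4 * k + 4

/-- The side `b(k) = (1/2)k(k² − 4k + 20)` of the Heron triangle family. -/
def sideB (k : ℚ) : ℚ := (1 / 2) * k * (k ^ 2 - 4 * k + 20)

/-- The side `c(k) = (1/2)(k+2)(k² − 4)` of the Heron triangle family. -/
def sideC (k : ℚ) : ℚ := (1 / 2) * (k + 2) * (k ^ 2 - 4)

theorem Rat.natCast_ne_sq_of_lt_of_lt {m n : ℕ} (hm : m ^ 2 < n) (hn : n < (m + 1) ^ 2) (s : ℚ) :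
    (n : ℚ) ≠ s ^ 2 := by
  intro h
  obtain ⟨r, hr⟩ := Rat.isSquare_natCast_iff.mp ⟨s, by rw [h, sq]⟩
  exact Nat.not_exists_sq' hm hn ⟨r, by rw [hr, sq]⟩

theorem Rat.eq_one_of_dvd_num_of_dvd_den {p : ℕ} (k : ℚ) (hnum : (p : ℤ) ∣ k.num)
    (hden : p ∣ k.den) : p = 1 :=
  Nat.Coprime.eq_one_of_dvd (Nat.Coprime.coprime_dvd_left (Int.natCast_dvd.mp hnum) k.reduced) hden

/-- Clearing denominators turns a rational zero `num / den` into the zero `(num, den)` of the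
homogenized cubic, so `p` would divide both `num` and `den`. -/
theorem cubic_ne_zero_of_zmod {p : ℕ} (hp : p ≠ 1) {a b c d : ℤ}
    (h : ∀ x y : ZMod p, a * x ^ 3 + b * x ^ 2 * y + c * x * y ^ 2 + d * y ^ 3 = 0 → x = 0 ∧ y = 0)
    (k : ℚ) : a * k ^ 3 + b * k ^ 2 + c * k + d ≠ 0 := by
  intro hk
  set n := k.num
  set m : ℤ := (k.den : ℤ)
  have hint : a * n ^ 3 + b * n ^ 2 * m + c * n * m ^ 2 + d * m ^ 3 = 0 := by
    have : ((a * n ^ 3 + b * n ^ 2 * m + c * n * m ^ 2 + d * m ^ 3 : ℤ) : ℚ)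
        = k.den ^ 3 * (a * k ^ 3 + b * k ^ 2 + c * k + d) := by
      push_cast [n, m, ← Rat.mul_den_eq_num]; ring
    rw [hk, mul_zero] at this
    exact_mod_cast this
  obtain ⟨hnum, hden⟩ := h n m (by exact_mod_cast congrArg (Int.cast : ℤ → ZMod p) hint)
  exact hp (k.eq_one_of_dvd_num_of_dvd_den ((ZMod.intCast_zmod_eq_zero_iff_dvd _ _).mp hnum)
    ((ZMod.natCast_eq_zero_iff _ _).mp (by rw [← Int.cast_natCast]; exact hden)))

theorem sideA_pos (k : ℚ) : 0 < sideA k := by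
  unfold sideA
  nlinarith [sq_nonneg (5 * k - 2)]

theorem sideB_ne_zero {k : ℚ} (hk : k ≠ 0) : sideB k ≠ 0 := by
  have hq : k ^ 2 - 4 * k + 20 ≠ 0 := by nlinarith [sq_nonneg (k - 2)]
  unfold sideB
  exact mul_ne_zero (mul_ne_zero (by norm_num) hk) hq

theorem sideC_ne_zero {k : ℚ} (h2 : k ≠ 2) (hm2 : k ≠ -2) : sideC k ≠ 0 := by
  have hfac : sideC k = (1 / 2) * (k + 2) ^ 2 * (k - 2) := by unfold sideC; ring
  rw [hfac]
  exact mul_ne_zero (mul_ne_zero (by norm_num) (pow_ne_zero 2 (add_eq_zero_iff_eq_neg.not.mpr hm2)))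
    (sub_ne_zero.mpr h2)

theorem sideA_ne_sideC (k : ℚ) : sideA k ≠ sideC k := by
  intro h
  apply cubic_ne_zero_of_zmod (p := 3) (a := 1) (b := -8) (c := 4) (d := -16) (by norm_num)
    (by decide) k
  unfold sideA sideC at h
  push_cast
  linear_combination (-2) * h

theorem sideB_ne_sideA {k : ℚ} (h2 : k ≠ 2) : sideB k ≠ sideA k := by
  have hdisc : ∀ s : ℚ, discrim 1 (-12) 4 ≠ s ^ 2 := by
    rw [show discrim (1 : ℚ) (-12) 4 = (128 : ℕ) by norm_num [discrim]]
    exact Rat.natCast_ne_sq_of_lt_of_lt (m := 11) (by norm_num) (by norm_num)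
  intro h
  have hfac : (k - 2) * (k ^ 2 - 12 * k + 4) = 0 := by
    unfold sideA sideB at h
    linear_combination 2 * h
  rcases mul_eq_zero.mp hfac with hk | hq
  · exact h2 (sub_eq_zero.mp hk)
  · exact quadratic_ne_zero_of_discrim_ne_sq hdisc k (by linear_combination hq)

theorem sideB_ne_sideC (k : ℚ) : sideB k ≠ sideC k := by
  have hdisc : ∀ s : ℚ, discrim 3 (-12) (-4) ≠ s ^ 2 := by
    rw [show discrim (3 : ℚ) (-12) (-4) = (192 : ℕ) by norm_num [discrim]]
    exact Rat.natCast_ne_sq_of_lt_of_lt (m := 13) (by norm_num) (by norm_num)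
  intro h
  apply quadratic_ne_zero_of_discrim_ne_sq hdisc k
  unfold sideB sideC at h
  linear_combination (-1) * h

/-- for every rational `k ∉ {0, 2, −2}`, the quantities `a(k)`, `b(k)`,
`c(k)` are nonzero and the products `a(k)b(k)`, `b(k)c(k)`, `a(k)c(k)` are pairwise
distinct. -/
theorem sides_nonzero_products_distinct (k : ℚ) (h0 : k ≠ 0) (h2 : k ≠ 2) (hm2 : k ≠ -2) :
    sideA k ≠ 0 ∧ sideB k ≠ 0 ∧ sideC k ≠ 0 ∧
    sideA k * sideB k ≠ sideB k * sideC k ∧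
    sideB k * sideC k ≠ sideA k * sideC k ∧
    sideA k * sideB k ≠ sideA k * sideC k := by
  have hA : sideA k ≠ 0 := (sideA_pos k).ne'
  have hB : sideB k ≠ 0 := sideB_ne_zero h0
  have hC : sideC k ≠ 0 := sideC_ne_zero h2 hm2
  refine ⟨hA, hB, hC, ?_, ?_, ?_⟩
  · rw [mul_comm (sideA k)]
    exact (mul_right_injective₀ hB).ne (sideA_ne_sideC k)
  · exact (mul_left_injective₀ hC).ne (sideB_ne_sideA h2)
  · exact (mul_right_injective₀ hA).ne (sideB_ne_sideC k)
end

section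
/- For every rational number k, the discriminant Δ(k) = 16(A(k)² − 4B(k))B(k)² of the curve y² = x³ + A(k)x² + B(k)x satisfies the identity Δ(k) = (1/16)·k²·(k² − 4k + 20)²·(k³ − 8k² + 4k − 16)²·(k² − 12k + 4)²·(k − 2)⁴·(k + 2)⁴·(5k² − 4k + 4)²·(3k² − 12k − 4)². -/
/-- The coefficient `A(k) = a(k)b(k) + b(k)c(k) − 2a(k)c(k)` of the shifted curve
`y² = x³ + Ax² + Bx`. -/
def coeffA (k : ℚ) : ℚ := sideA k * sideB k + sideB k * sideC k - 2 * (sideA k * sideC k)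

/-- The coefficient `B(k) = (a(k)b(k) − a(k)c(k))(b(k)c(k) − a(k)c(k))` of the shifted
curve `y² = x³ + Ax² + Bx`. -/
def coeffB (k : ℚ) : ℚ :=
  (sideA k * sideB k - sideA k * sideC k) * (sideB k * sideC k - sideA k * sideC k)

theorem add_sq_sub_four_mul_eq_sub_sq {R : Type*} [CommRing R] (u v : R) :
    (u + v) ^ 2 - 4 * (u * v) = (u - v) ^ 2 := by
  ring

theorem coeffA_eq (k : ℚ) :
    coeffA k = sideA k * (sideB k - sideC k) + sideC k * (sideB k - sideA k) := by
  unfold coeffA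
  ring

theorem coeffB_eq (k : ℚ) :
    coeffB k = sideA k * (sideB k - sideC k) * (sideC k * (sideB k - sideA k)) := by
  unfold coeffB
  ring

theorem discriminant_eq_sides (k : ℚ) :
    16 * (coeffA k ^ 2 - 4 * coeffB k) * coeffB k ^ 2 =
      16 * (sideA k * sideB k * sideC k *
        ((sideA k - sideB k) * (sideB k - sideC k) * (sideC k - sideA k))) ^ 2 := by
  rw [coeffA_eq, coeffB_eq, add_sq_sub_four_mul_eq_sub_sq]
  ring

theorem sideC_eq (k : ℚ) : sideC k = (k + 2) ^ 2 * (k - 2) / 2 := by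
  unfold sideC
  ring

theorem sideA_sub_sideB (k : ℚ) :
    sideA k - sideB k = -((k - 2) * (k ^ 2 - 12 * k + 4)) / 2 := by
  unfold sideA sideB
  ring

theorem sideB_sub_sideC (k : ℚ) : sideB k - sideC k = -(3 * k ^ 2 - 12 * k - 4) := by
  unfold sideB sideC
  ring

theorem sideC_sub_sideA (k : ℚ) :
    sideC k - sideA k = (k ^ 3 - 8 * k ^ 2 + 4 * k - 16) / 2 := by
  unfold sideC sideA
  ring

/-- the identity for the discriminant `Δ(k) = 16(A(k)² − 4B(k))B(k)²`. -/
theorem discriminant_identity (k : ℚ) :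
    16 * (coeffA k ^ 2 - 4 * coeffB k) * coeffB k ^ 2 =
      (1 / 16) * k ^ 2 * (k ^ 2 - 4 * k + 20) ^ 2 * (k ^ 3 - 8 * k ^ 2 + 4 * k - 16) ^ 2
        * (k ^ 2 - 12 * k + 4) ^ 2 * (k - 2) ^ 4 * (k + 2) ^ 4 * (5 * k ^ 2 - 4 * k + 4) ^ 2
        * (3 * k ^ 2 - 12 * k - 4) ^ 2 := by
  rw [discriminant_eq_sides, sideA_sub_sideB, sideB_sub_sideC, sideC_sub_sideA, sideC_eq]
  unfold sideA sideB
  ring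
end

section
/- For every rational number k > 2, the quantities a(k), b(k), c(k) are positive and satisfy the strict triangle inequalities a(k) + b(k) > c(k), a(k) + c(k) > b(k), and b(k) + c(k) > a(k); hence they are the side lengths of a Heron triangle whose area k(k² − 4)² is rational. -/
theorem pos_and_triangle_of_semiperimeter_sub_pos {α : Type*} [Field α] [LinearOrder α]
    [IsStrictOrderedRing α] {a b c : α} (ha : 0 < (a + b + c) / 2 - a)
    (hb : 0 < (a + b + c) / 2 - b) (hc : 0 < (a + b + c) / 2 - c) :
    0 < a ∧ 0 < b ∧ 0 < c ∧ c < a + b ∧ b < a + c ∧ a < b + c := by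
  refine ⟨?_, ?_, ?_, ?_, ?_, ?_⟩ <;> linarith

theorem sideA_add_sideB_add_sideC (k : ℚ) : sideA k + sideB k + sideC k = k * (k + 2) ^ 2 := by
  unfold sideA sideB sideC; ring

theorem semiperimeter_sub_sideA (k : ℚ) :
    (sideA k + sideB k + sideC k) / 2 - sideA k = (k - 2) ^ 3 / 2 := by
  unfold sideA sideB sideC; ring

theorem semiperimeter_sub_sideB (k : ℚ) :
    (sideA k + sideB k + sideC k) / 2 - sideB k = 4 * k * (k - 2) := by
  unfold sideA sideB sideC; ring

theorem semiperimeter_sub_sideC (k : ℚ) :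
    (sideA k + sideB k + sideC k) / 2 - sideC k = (k + 2) ^ 2 := by
  unfold sideA sideB sideC; ring

/-- for rational `k > 2`, the quantities `a(k)`, `b(k)`, `c(k)` are
positive and satisfy the strict triangle inequalities; hence they are the side lengths of
a Heron triangle whose (rational) area is `k(k² − 4)²`, i.e. the Heron product equals
the square of this rational number. -/
theorem heron_triangle_of_two_lt (k : ℚ) (hk : 2 < k) :
    0 < sideA k ∧ 0 < sideB k ∧ 0 < sideC k ∧
    sideC k < sideA k + sideB k ∧ sideB k < sideA k + sideC k ∧
    sideA k < sideB k + sideC k ∧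
    ((sideA k + sideB k + sideC k) / 2)
      * ((sideA k + sideB k + sideC k) / 2 - sideA k)
      * ((sideA k + sideB k + sideC k) / 2 - sideB k)
      * ((sideA k + sideB k + sideC k) / 2 - sideC k) = (k * (k ^ 2 - 4) ^ 2) ^ 2 := by
  have hk2 : 0 < k - 2 := sub_pos.2 hk
  have hA : 0 < (sideA k + sideB k + sideC k) / 2 - sideA k := by
    rw [semiperimeter_sub_sideA]; exact div_pos (pow_pos hk2 3) two_pos
  have hB : 0 < (sideA k + sideB k + sideC k) / 2 - sideB k := by
    rw [semiperimeter_sub_sideB]; exact mul_pos (by linarith) hk2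
  have hC : 0 < (sideA k + sideB k + sideC k) / 2 - sideC k := by
    rw [semiperimeter_sub_sideC]; exact pow_pos (by linarith) 2
  obtain ⟨ha, hb, hc, hab, hac, hbc⟩ := pos_and_triangle_of_semiperimeter_sub_pos hA hB hC
  refine ⟨ha, hb, hc, hab, hac, hbc, ?_⟩
  rw [semiperimeter_sub_sideA, semiperimeter_sub_sideB, semiperimeter_sub_sideC,
    sideA_add_sideB_add_sideC]
  ring
end

section
/- Let a, b, c, u, v be rational numbers with u ≠ 0 satisfying v² = u(u − a)(u − b)(u − c). Then ζ = 1/u and η = v/u² satisfy η² = (1 − aζ)(1 − bζ)(1 − cζ), and furthermore x = −abc/u and y = abc·v/u² satisfy y² = (x + ab)(x + bc)(x + ac). -/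
theorem sq_div_sq_eq_of_sq_eq_mul_sub_mul_sub_mul_sub {K : Type*} [Field K] {a b c u v : K}
    (hu : u ≠ 0) (h : v ^ 2 = u * (u - a) * (u - b) * (u - c)) :
    (v / u ^ 2) ^ 2 = (1 - a * (1 / u)) * (1 - b * (1 / u)) * (1 - c * (1 / u)) := by
  field_simp
  linear_combination h

-- `-abcζ + ab = ab (1 - cζ)` and likewise for the other two factors, so the cubic is `(abc)²` times the old one.
theorem mul_sq_eq_of_sq_eq_one_sub_mul {R : Type*} [CommRing R] {a b c ζ η : R}
    (h : η ^ 2 = (1 - a * ζ) * (1 - b * ζ) * (1 - c * ζ)) :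
    (a * b * c * η) ^ 2 =
      (-(a * b * c) * ζ + a * b) * (-(a * b * c) * ζ + b * c) * (-(a * b * c) * ζ + a * c) := by
  linear_combination (a * b * c) ^ 2 * h

/-- the change of coordinates `(u, v) → (ζ, η) = (1/u, v/u²)` followed by
`(ζ, η) → (x, y) = (−abcζ, abcη)` transforms `v² = u(u−a)(u−b)(u−c)` into
`η² = (1 − aζ)(1 − bζ)(1 − cζ)` and then into `y² = (x + ab)(x + bc)(x + ac)`. -/
theorem coordinate_change (a b c u v : ℚ) (hu : u ≠ 0)
    (h : v ^ 2 = u * (u - a) * (u - b) * (u - c)) :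
    (v / u ^ 2) ^ 2 = (1 - a * (1 / u)) * (1 - b * (1 / u)) * (1 - c * (1 / u)) ∧
    (a * b * c * (v / u ^ 2)) ^ 2 =
      (-(a * b * c) / u + a * b) * (-(a * b * c) / u + b * c)
        * (-(a * b * c) / u + a * c) := by
  have hζη := sq_div_sq_eq_of_sq_eq_mul_sub_mul_sub_mul_sub hu h
  refine ⟨hζη, ?_⟩
  simpa only [← div_eq_mul_one_div] using mul_sq_eq_of_sq_eq_one_sub_mul hζη
end

section
/- For a rational number k with k ∉ {0, 2, −2}, one of the Pythagorean relations a(k)² + b(k)² = c(k)², a(k)² + c(k)² = b(k)², or b(k)² + c(k)² = a(k)² holds if and only if k = 6 or k = 2/3. -/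
theorem sq_sub_twelve_mul_add_four_ne_zero (k : ℚ) : k ^ 2 - 12 * k + 4 ≠ 0 := by
  intro h
  have : IsSquare (32 : ℚ) := ⟨k - 6, by linear_combination -h⟩
  norm_num at this

theorem three_mul_sq_sub_four_mul_add_twelve_pos (k : ℚ) : 0 < 3 * k ^ 2 - 4 * k + 12 := by
  nlinarith [sq_nonneg (3 * k - 2)]

theorem sideA_sq_add_sideB_sq_eq_sideC_sq_iff (k : ℚ) :
    sideA k ^ 2 + sideB k ^ 2 = sideC k ^ 2 ↔
      k * (k ^ 2 - 12 * k + 4) * (3 * k ^ 2 - 4 * k + 12) = 0 := by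
  unfold sideA sideB sideC
  constructor <;> intro h <;> linear_combination -h

theorem sideA_sq_add_sideC_sq_eq_sideB_sq_iff (k : ℚ) :
    sideA k ^ 2 + sideC k ^ 2 = sideB k ^ 2 ↔ (k - 2 / 3) * (k - 2) * (k + 2) ^ 3 = 0 := by
  unfold sideA sideB sideC
  constructor <;> intro h
  · linear_combination h / 3
  · linear_combination 3 * h

theorem sideB_sq_add_sideC_sq_eq_sideA_sq_iff (k : ℚ) :
    sideB k ^ 2 + sideC k ^ 2 = sideA k ^ 2 ↔ k * (k - 6) * (k - 2) * (k + 2) ^ 3 = 0 := by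
  unfold sideA sideB sideC
  constructor <;> intro h
  · linear_combination 2 * h
  · linear_combination h / 2

/-- for rational `k ∉ {0, 2, −2}`, one of the Pythagorean relations among
`a(k)`, `b(k)`, `c(k)` holds iff `k = 6` or `k = 2/3`. -/
theorem pythagorean_iff (k : ℚ) (h0 : k ≠ 0) (h2 : k ≠ 2) (hm2 : k ≠ -2) :
    (sideA k ^ 2 + sideB k ^ 2 = sideC k ^ 2 ∨
     sideA k ^ 2 + sideC k ^ 2 = sideB k ^ 2 ∨
     sideB k ^ 2 + sideC k ^ 2 = sideA k ^ 2) ↔ (k = 6 ∨ k = 2 / 3) := by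
  rw [sideA_sq_add_sideB_sq_eq_sideC_sq_iff, sideA_sq_add_sideC_sq_eq_sideB_sq_iff,
    sideB_sq_add_sideC_sq_eq_sideA_sq_iff]
  have hk_sub_two : k - 2 ≠ 0 := sub_ne_zero.mpr h2
  have hk_add_two : k + 2 ≠ 0 := by rwa [← sub_neg_eq_add, sub_ne_zero]
  simp [sq_sub_twelve_mul_add_four_ne_zero, (three_mul_sq_sub_four_mul_add_twelve_pos k).ne',
    h0, hk_sub_two, hk_add_two, sub_eq_zero, or_comm]
end
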